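/- For every rational α such that the curve is nonsingular, the point (0, 0) on the curve Y² + (1−α)XY − (α+α²)Y = X³ − (α+α²)X² has order exactly 6. -/

import Mathlib

/-!
In the Tate normal form `E(b, c) : Y² + (1 - c)XY - bY = X³ - bX²` the multiples of `P = (0, 0)`
are `2P = (b, bc)` and `3P = (c, b - c)`, with tangent slope `0` at `P` and chord slope `c`
through `P` and `2P`. The point `-3P` is `(c, c²)`, so `3P` is `2`-torsion exactly when
`b = c + c²`; then `6P = 0` while `2P` and `3P` are affine points, so `P` has order `6`.
The discriminant of `E(b, c)` is divisible by `b³`, so it forces `b ≠ 0`, which keeps `P`, `2P`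
and `3P` nonsingular and both slopes defined.
-/

open WeierstrassCurve WeierstrassCurve.Affine WeierstrassCurve.Affine.Point

lemma addOrderOf_eq_six {G : Type*} [AddMonoid G] {x : G} (h6 : 6 • x = 0) (h3 : 3 • x ≠ 0)
    (h2 : 2 • x ≠ 0) : addOrderOf x = 6 := by
  refine addOrderOf_eq_of_nsmul_and_div_prime_nsmul (by norm_num) h6 fun p hp hp6 => ?_
  obtain rfl | rfl : p = 2 ∨ p = 3 := by
    have : p ≤ 6 := Nat.le_of_dvd (by norm_num) hp6
    interval_cases p <;> first | omega | norm_num at hp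
  exacts [h3, h2]

namespace WeierstrassCurve.Affine

variable {F : Type*} [Field F] {b c : F}

def tateNormalForm (b c : F) : Affine F :=
  { a₁ := 1 - c, a₂ := -b, a₃ := -b, a₄ := 0, a₆ := 0 }

lemma tateNormalForm_Δ (b c : F) : (tateNormalForm b c).Δ =
    b ^ 3 * (16 * b ^ 2 - 8 * b * c ^ 2 - 20 * b * c + b + c * (c - 1) ^ 3) := by
  simp only [tateNormalForm, Δ, b₂, b₄, b₆, b₈]
  ring

lemma tateNormalForm_nonsingular_zero_zero (hb : b ≠ 0) :
    (tateNormalForm b c).Nonsingular 0 0 := by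
  rw [nonsingular_iff, equation_iff]
  simp only [tateNormalForm]
  exact ⟨by ring, Or.inr fun h => hb (by linear_combination -h)⟩

lemma tateNormalForm_nonsingular_b_mul (hb : b ≠ 0) :
    (tateNormalForm b c).Nonsingular b (b * c) := by
  rw [nonsingular_iff, equation_iff]
  simp only [tateNormalForm]
  refine ⟨by ring, ?_⟩
  by_cases hc : c = 0
  · subst hc
    exact Or.inl fun h => hb (pow_eq_zero_iff two_ne_zero |>.mp (by linear_combination -h))
  · exact Or.inr fun h => mul_ne_zero hb hc (by linear_combination h)

lemma tateNormalForm_nonsingular_c_sub (hc : c ≠ 0) (hbc : b = c + c ^ 2) :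
    (tateNormalForm b c).Nonsingular c (b - c) := by
  rw [nonsingular_iff, equation_iff]
  simp only [tateNormalForm]
  subst hbc
  refine ⟨by ring, Or.inl fun h => hc ?_⟩
  exact pow_eq_zero_iff three_ne_zero |>.mp (by linear_combination h)

variable [DecidableEq F]

lemma tateNormalForm_two_nsmul_origin (hb : b ≠ 0) :
    2 • some 0 0 (tateNormalForm_nonsingular_zero_zero (c := c) hb) =
      some b (b * c) (tateNormalForm_nonsingular_b_mul hb) := by
  have hy : (0 : F) ≠ (tateNormalForm b c).negY 0 0 := by
    simpa [tateNormalForm, negY] using hb.symm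
  have hslope : (tateNormalForm b c).slope 0 0 0 0 = 0 := by
    rw [slope_of_Y_ne rfl hy]; simp [tateNormalForm]
  rw [two_nsmul, add_self_of_Y_ne hy, some.injEq]
  simp only [addX, negAddY, addY, negY, hslope]
  simp only [tateNormalForm]
  constructor <;> ring

lemma tateNormalForm_three_nsmul_origin (hb : b ≠ 0)
    (h₃ : (tateNormalForm b c).Nonsingular c (b - c)) :
    3 • some 0 0 (tateNormalForm_nonsingular_zero_zero hb) = some c (b - c) h₃ := by
  have hslope : (tateNormalForm b c).slope b 0 (b * c) 0 = c := by
    rw [slope_of_X_ne hb, div_eq_iff (sub_ne_zero.mpr hb)]; ring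
  rw [succ_nsmul, tateNormalForm_two_nsmul_origin hb, add_of_X_ne hb, some.injEq]
  simp only [addX, negAddY, addY, negY, hslope]
  simp only [tateNormalForm]
  constructor <;> ring

lemma tateNormalForm_six_nsmul_origin (hb : b ≠ 0) (hbc : b = c + c ^ 2) :
    6 • some 0 0 (tateNormalForm_nonsingular_zero_zero (c := c) hb) = 0 := by
  have hc : c ≠ 0 := by rintro rfl; exact hb (by simpa using hbc)
  have h₃ := tateNormalForm_nonsingular_c_sub hc hbc
  have h3P : some c (b - c) h₃ + some c (b - c) h₃ = 0 :=
    add_self_of_Y_eq <| by simp only [negY, tateNormalForm]; rw [hbc]; ring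
  rw [show 6 = 3 + 3 from rfl, add_nsmul, tateNormalForm_three_nsmul_origin hb h₃, h3P]

end WeierstrassCurve.Affine

/-- For rational `α` with the Tate normal form `Y² + (1−α)XY − (α+α²)Y = X³ − (α+α²)X²`
nonsingular, the point `(0, 0)` has order exactly 6. -/
theorem tate_order_six (α : ℚ)
    (W : WeierstrassCurve.Affine ℚ)
    (hW : W = { a₁ := 1 - α, a₂ := -(α + α ^ 2), a₃ := -(α + α ^ 2), a₄ := 0, a₆ := 0 })
    (hΔ : W.Δ ≠ 0) :
    ∃ h : W.Nonsingular 0 0,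
      addOrderOf (WeierstrassCurve.Affine.Point.some 0 0 h) = 6 := by
  change W = tateNormalForm (α + α ^ 2) α at hW
  subst hW
  have hb : α + α ^ 2 ≠ 0 := fun hb => hΔ <| by rw [tateNormalForm_Δ, hb]; ring
  have hα : α ≠ 0 := by rintro rfl; exact hb (by ring)
  refine ⟨tateNormalForm_nonsingular_zero_zero hb,
    addOrderOf_eq_six (tateNormalForm_six_nsmul_origin hb rfl) ?_ ?_⟩
  · rw [tateNormalForm_three_nsmul_origin hb (tateNormalForm_nonsingular_c_sub hα rfl)]
    exact some_ne_zero _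
  · rw [tateNormalForm_two_nsmul_origin hb]
    exact some_ne_zero _
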